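/- A chain δ : δ_0 ≤ ... ≤ δ_{p+q} of partitions of {1,...,k} with δ_0 = min and δ_{p+q} = max decomposes as a graft γ ∘ (β_1,...,β_n) along a partition α = {T_1,...,T_n} if and only if δ_p = α (i.e., the p-th partition in the chain equals α); in that case the decomposition is unique. -/

import Mathlib

/-- A partition of `{1,...,n}`, modeled as `Fin n`: a collection of nonempty,
pairwise disjoint subsets (blocks) covering `Fin n`. -/
structure PartitionFin (n : ℕ) where
  blocks : Set (Set (Fin n))
  empty_not_mem : ∅ ∉ blocks
  existsUnique_mem : ∀ a : Fin n, ∃! B, B ∈ blocks ∧ a ∈ B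

/-- The refinement order of the paper: `l ≤ l'` iff every block of `l` is a
union of blocks of `l'` (i.e. `l'` refines `l`). -/
def PartitionFin.le {n : ℕ} (l l' : PartitionFin n) : Prop :=
  ∀ T ∈ l.blocks, ∃ S ⊆ l'.blocks, T = ⋃₀ S

/-- `c` is a partition of the subset `S`: a collection of nonempty subsets of
`S` such that every element of `S` lies in exactly one member of `c`. -/
def IsPartitionOf {α : Type*} (S : Set α) (c : Set (Set α)) : Prop :=
  ∅ ∉ c ∧ (∀ B ∈ c, B ⊆ S) ∧ ∀ a ∈ S, ∃! B, B ∈ c ∧ a ∈ B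

/-- Refinement order on collections of blocks: every block of `c` is a union of
blocks of `c'`. -/
def bles {α : Type*} (c c' : Set (Set α)) : Prop :=
  ∀ B ∈ c, ∃ S ⊆ c', B = ⋃₀ S

/-- A chain of partitions of `{1,...,n}` of length `p` from the one-block
partition `min` to the singleton partition `max`. -/
def IsMinMaxChain {n : ℕ} (p : ℕ) (γ : Fin (p + 1) → PartitionFin n) : Prop :=
  (∀ i j, i ≤ j → (γ i).le (γ j)) ∧
  (γ 0).blocks = {Set.univ} ∧
  (γ (Fin.last p)).blocks = {S | ∃ a : Fin n, S = {a}}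

/-- For each `j`, `β j` is a length-`q` chain of partitions of the block `T j`,
from the one-block partition `{T j}` to the partition of `T j` into
singletons. -/
def IsBetaChain {k n : ℕ} (q : ℕ) (T : Fin n → Set (Fin k))
    (β : Fin n → Fin (q + 1) → Set (Set (Fin k))) : Prop :=
  ∀ j, (∀ r, IsPartitionOf (T j) (β j r)) ∧
    (∀ r s, r ≤ s → bles (β j r) (β j s)) ∧
    β j 0 = {T j} ∧
    β j (Fin.last q) = {B | ∃ a ∈ T j, B = {a}}

/-- The graft `γ ∘ (β_1,...,β_n)` along the partition `{T_1,...,T_n}` of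
`{1,...,k}`: a length-`(p+q)` sequence of collections of blocks; for `i ≤ p`
the `i`-th term is `γ_i` coarsened via the blocks `T_s` (each block `S` of
`γ_i` is replaced by `⋃_{s ∈ S} T_s`), and for `i = p + r` it is the blockwise
union of the `(β_j)_r`. -/
def graft {k n : ℕ} (p q : ℕ) (T : Fin n → Set (Fin k))
    (γ : Fin (p + 1) → PartitionFin n)
    (β : Fin n → Fin (q + 1) → Set (Set (Fin k))) :
    Fin (p + q + 1) → Set (Set (Fin k)) := fun i =>
  if h : (i : ℕ) ≤ p then
    {B | ∃ S ∈ (γ ⟨i, by omega⟩).blocks, B = ⋃ s ∈ S, T s}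
  else
    {B | ∃ j, B ∈ β j ⟨(i : ℕ) - p, by have := i.isLt; omega⟩}


theorem PartitionFin.ext' {n : ℕ} {l l' : PartitionFin n} (h : l.blocks = l'.blocks) : l = l' := by
  cases l; cases l'; cases h; rfl

theorem PartitionFin.eq_of_mem {n : ℕ} (l : PartitionFin n) {B B' : Set (Fin n)}
    (hB : B ∈ l.blocks) (hB' : B' ∈ l.blocks) {a : Fin n} (ha : a ∈ B) (ha' : a ∈ B') :
    B = B' := by
  obtain ⟨C, -, hu⟩ := l.existsUnique_mem a
  rw [hu B ⟨hB, ha⟩, hu B' ⟨hB', ha'⟩]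

theorem PartitionFin.le_iff {n : ℕ} {l l' : PartitionFin n} :
    l.le l' ↔ ∀ C ∈ l'.blocks, ∃ B ∈ l.blocks, C ⊆ B := by
  constructor
  · intro h C hC
    have hne : C.Nonempty := by
      rcases Set.eq_empty_or_nonempty C with rfl | h'
      · exact absurd hC l'.empty_not_mem
      · exact h'
    obtain ⟨a, ha⟩ := hne
    obtain ⟨B, ⟨hB, haB⟩, -⟩ := l.existsUnique_mem a
    obtain ⟨S, hS, hBS⟩ := h B hB
    refine ⟨B, hB, ?_⟩
    rw [hBS] at haB ⊢
    obtain ⟨C', hC'S, haC'⟩ := haB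
    have hCC : C = C' := l'.eq_of_mem hC (hS hC'S) ha haC'
    exact hCC ▸ Set.subset_sUnion_of_mem hC'S
  · intro h B hB
    refine ⟨{C | C ∈ l'.blocks ∧ C ⊆ B}, fun C hC => hC.1, ?_⟩
    apply Set.Subset.antisymm
    · intro a haB
      obtain ⟨C, ⟨hC, haC⟩, -⟩ := l'.existsUnique_mem a
      obtain ⟨B', hB', hCB'⟩ := h C hC
      have hBB : B = B' := l.eq_of_mem hB hB' haB (hCB' haC)
      exact ⟨C, ⟨hC, hBB ▸ hCB'⟩, haC⟩
    · exact Set.sUnion_subset fun C hC => hC.2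

theorem PartitionFin.block_eq {n : ℕ} {l l' : PartitionFin n} (h : l.le l') {B : Set (Fin n)}
    (hB : B ∈ l.blocks) : B = ⋃₀ {C | C ∈ l'.blocks ∧ C ⊆ B} := by
  apply Set.Subset.antisymm
  · intro a haB
    obtain ⟨C, ⟨hC, haC⟩, -⟩ := l'.existsUnique_mem a
    obtain ⟨B', hB', hCB'⟩ := PartitionFin.le_iff.mp h C hC
    have hBB : B = B' := l.eq_of_mem hB hB' haB (hCB' haC)
    exact ⟨C, ⟨hC, hBB ▸ hCB'⟩, haC⟩
  · exact Set.sUnion_subset fun C hC => hC.2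

def coarsen {k n : ℕ} (T : Fin n → Set (Fin k)) (l : PartitionFin k)
    (hne : ∀ j, (T j).Nonempty)
    (hdisj : ∀ (j j' : Fin n) (a : Fin k), a ∈ T j → a ∈ T j' → j = j')
    (hcov : ∀ B ∈ l.blocks, B = ⋃ s ∈ {s | T s ⊆ B}, T s) : PartitionFin n where
  blocks := {S | ∃ B ∈ l.blocks, S = {s | T s ⊆ B}}
  empty_not_mem := by
    rintro ⟨B, hB, hBe⟩
    have hc := hcov B hB
    rw [← hBe] at hc
    simp only [Set.mem_empty_iff_false, Set.iUnion_of_empty, Set.iUnion_empty] at hc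
    exact l.empty_not_mem (hc ▸ hB)
  existsUnique_mem := by
    intro a
    obtain ⟨x, hx⟩ := hne a
    obtain ⟨B, ⟨hB, hxB⟩, -⟩ := l.existsUnique_mem x
    have hTa : T a ⊆ B := by
      have hc := hcov B hB
      rw [hc] at hxB
      obtain ⟨j, hj, hxj⟩ := Set.mem_iUnion₂.mp hxB
      rw [hdisj a j x hx hxj]
      exact hj
    refine ⟨{s | T s ⊆ B}, ⟨⟨B, hB, rfl⟩, hTa⟩, ?_⟩
    rintro S ⟨⟨B', hB', rfl⟩, haS⟩
    have hBB : B' = B := l.eq_of_mem hB' hB (haS hx) (hTa hx)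
    rw [hBB]

theorem coarsen_blocks {k n : ℕ} (T : Fin n → Set (Fin k)) (l : PartitionFin k)
    (hne : ∀ j, (T j).Nonempty)
    (hdisj : ∀ (j j' : Fin n) (a : Fin k), a ∈ T j → a ∈ T j' → j = j')
    (hcov : ∀ B ∈ l.blocks, B = ⋃ s ∈ {s | T s ⊆ B}, T s) :
    (coarsen T l hne hdisj hcov).blocks = {S | ∃ B ∈ l.blocks, S = {s | T s ⊆ B}} := rfl

theorem graft_apply_le {k n : ℕ} (p q : ℕ) (T : Fin n → Set (Fin k))
    (γ : Fin (p + 1) → PartitionFin n) (β : Fin n → Fin (q + 1) → Set (Set (Fin k)))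
    (i : Fin (p + q + 1)) (h : (i : ℕ) ≤ p) :
    graft p q T γ β i = {B | ∃ S ∈ (γ ⟨i, Nat.lt_succ_of_le h⟩).blocks, B = ⋃ s ∈ S, T s} := by
  unfold graft
  rw [dif_pos h]

theorem graft_apply_gt {k n : ℕ} (p q : ℕ) (T : Fin n → Set (Fin k))
    (γ : Fin (p + 1) → PartitionFin n) (β : Fin n → Fin (q + 1) → Set (Set (Fin k)))
    (i : Fin (p + q + 1)) (h : p < (i : ℕ)) :
    graft p q T γ β i =
      {B | ∃ j, B ∈ β j ⟨(i : ℕ) - p, by have := i.isLt; omega⟩} := by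
  unfold graft
  rw [dif_neg (by omega)]

/-- A chain `δ_0 ≤ ... ≤ δ_{p+q}` of partitions of `{1,...,k}` with `δ_0 = min`
and `δ_{p+q} = max` decomposes as a graft `γ ∘ (β_1,...,β_n)` along the
partition `α = {T_1,...,T_n}` if and only if `δ_p = α`; and in that case the
decomposition is unique. -/
theorem graft_decomposition (k n p q : ℕ)
    (T : Fin n → Set (Fin k))
    (hT : IsPartitionOf Set.univ {B | ∃ j, B = T j})
    (hTinj : Function.Injective T)
    (δ : Fin (p + q + 1) → PartitionFin k)
    (hmono : ∀ i j, i ≤ j → (δ i).le (δ j))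
    (h0 : (δ 0).blocks = {Set.univ})
    (hlast : (δ (Fin.last (p + q))).blocks = {S | ∃ a : Fin k, S = {a}}) :
    ((∃ (γ : Fin (p + 1) → PartitionFin n)
        (β : Fin n → Fin (q + 1) → Set (Set (Fin k))),
        IsMinMaxChain p γ ∧ IsBetaChain q T β ∧
        ∀ i, (δ i).blocks = graft p q T γ β i) ↔
      (δ ⟨p, by omega⟩).blocks = {B | ∃ j, B = T j}) ∧
    (∀ (γ γ' : Fin (p + 1) → PartitionFin n)
        (β β' : Fin n → Fin (q + 1) → Set (Set (Fin k))),
      IsMinMaxChain p γ → IsBetaChain q T β →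
      IsMinMaxChain p γ' → IsBetaChain q T β' →
      (∀ i, (δ i).blocks = graft p q T γ β i) →
      (∀ i, (δ i).blocks = graft p q T γ' β' i) →
      γ = γ' ∧ β = β') := by
  classical
  have hTne : ∀ j, (T j).Nonempty := fun j =>
    Set.nonempty_iff_ne_empty.mpr (fun h => hT.1 ⟨j, h.symm⟩)
  have hTdisj : ∀ (j j' : Fin n) (a : Fin k), a ∈ T j → a ∈ T j' → j = j' := by
    intro j j' a hj hj'
    obtain ⟨B, -, hu⟩ := hT.2.2 a (Set.mem_univ a)
    exact hTinj ((hu (T j) ⟨⟨j, rfl⟩, hj⟩).trans (hu (T j') ⟨⟨j', rfl⟩, hj'⟩).symm)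
  have hF : ∀ S S' : Set (Fin n), (⋃ s ∈ S, T s) = (⋃ s ∈ S', T s) → S ⊆ S' := by
    intro S S' h s hs
    obtain ⟨a, ha⟩ := hTne s
    have hmem : a ∈ ⋃ s' ∈ S', T s' := h ▸ Set.mem_biUnion hs ha
    obtain ⟨s', hs', ha'⟩ := Set.mem_iUnion₂.mp hmem
    rw [hTdisj s s' a ha ha']
    exact hs'
  have hFinj : ∀ S S' : Set (Fin n), (⋃ s ∈ S, T s) = (⋃ s ∈ S', T s) → S = S' :=
    fun S S' h => Set.Subset.antisymm (hF S S' h) (hF S' S h.symm)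
  constructor
  · constructor
    · rintro ⟨γ, β, hγ, hβ, hd⟩
      have e := hd ⟨p, by omega⟩
      rw [e, graft_apply_le p q T γ β _ (le_refl p)]
      have hlp : (⟨p, Nat.lt_succ_of_le (le_refl p)⟩ : Fin (p + 1)) = Fin.last p := rfl
      rw [hlp, hγ.2.2]
      ext B
      simp only [Set.mem_setOf_eq]
      constructor
      · rintro ⟨S, ⟨a, rfl⟩, rfl⟩
        exact ⟨a, by simp⟩
      · rintro ⟨j, rfl⟩
        exact ⟨{j}, ⟨j, rfl⟩, by simp⟩
    · intro hp
      have hcover : ∀ (i : Fin (p + q + 1)), (i : ℕ) ≤ p →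
          ∀ B ∈ (δ i).blocks, B = ⋃ s ∈ {s | T s ⊆ B}, T s := by
        intro i hi B hB
        have hle : (δ i).le (δ ⟨p, by omega⟩) := hmono _ _ hi
        apply Set.Subset.antisymm
        · intro a ha
          have hbe := PartitionFin.block_eq hle hB
          rw [hbe] at ha
          obtain ⟨C, ⟨hC, hCB⟩, haC⟩ := ha
          rw [hp] at hC
          obtain ⟨j, rfl⟩ := hC
          exact Set.mem_biUnion hCB haC
        · intro a ha
          obtain ⟨j, hj, haj⟩ := Set.mem_iUnion₂.mp ha
          exact hj haj
      have hbelow : ∀ (i : Fin (p + q + 1)), p ≤ (i : ℕ) →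
          ∀ B ∈ (δ i).blocks, ∃ j, B ⊆ T j := by
        intro i hi B hB
        have hle : (δ ⟨p, by omega⟩).le (δ i) := hmono _ _ hi
        obtain ⟨C, hC, hBC⟩ := PartitionFin.le_iff.mp hle B hB
        rw [hp] at hC
        obtain ⟨j, rfl⟩ := hC
        exact ⟨j, hBC⟩
      refine ⟨fun i => coarsen T (δ ⟨i.val, by have := i.isLt; omega⟩) hTne hTdisj
          (hcover ⟨i.val, by have := i.isLt; omega⟩ (Nat.lt_succ_iff.mp i.isLt)),
        fun j r => {B | B ∈ (δ ⟨p + r.val, by have := r.isLt; omega⟩).blocks ∧ B ⊆ T j},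
        ⟨?_, ?_, ?_⟩, ?_, ?_⟩
      · -- monotone γ
        intro i j hij
        rw [PartitionFin.le_iff]
        intro C hC
        rw [coarsen_blocks] at hC
        obtain ⟨B, hB, rfl⟩ := hC
        have hle : (δ ⟨i.val, by have := i.isLt; omega⟩).le (δ ⟨j.val, by have := j.isLt; omega⟩) :=
          hmono _ _ hij
        obtain ⟨B', hB', hBB'⟩ := PartitionFin.le_iff.mp hle B hB
        refine ⟨{s | T s ⊆ B'}, ⟨B', hB', rfl⟩, fun s hs => ?_⟩
        exact Set.Subset.trans hs hBB'
      · -- γ 0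
        rw [coarsen_blocks]
        have h00 : (⟨(0 : Fin (p + 1)).val, by omega⟩ : Fin (p + q + 1)) = 0 := Fin.ext (by simp)
        rw [h00, h0]
        ext S
        simp only [Set.mem_setOf_eq, Set.mem_singleton_iff]
        constructor
        · rintro ⟨B, hB, rfl⟩
          rw [hB]
          ext s
          simp [Set.subset_univ]
        · rintro rfl
          exact ⟨Set.univ, rfl, by ext s; simp [Set.subset_univ]⟩
      · -- γ last
        rw [coarsen_blocks]
        have hpl : (⟨(Fin.last p).val, by omega⟩ : Fin (p + q + 1)) = ⟨p, by omega⟩ :=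
          Fin.ext (by simp)
        rw [hpl, hp]
        ext S
        simp only [Set.mem_setOf_eq]
        constructor
        · rintro ⟨B, ⟨j, rfl⟩, rfl⟩
          refine ⟨j, ?_⟩
          ext s
          simp only [Set.mem_setOf_eq, Set.mem_singleton_iff]
          constructor
          · intro hsj
            obtain ⟨x, hx⟩ := hTne s
            exact hTdisj s j x hx (hsj hx)
          · rintro rfl
            exact le_refl _
        · rintro ⟨a, rfl⟩
          refine ⟨T a, ⟨a, rfl⟩, ?_⟩
          ext s
          simp only [Set.mem_singleton_iff, Set.mem_setOf_eq]
          constructor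
          · rintro rfl
            exact le_refl _
          · intro hsa
            obtain ⟨x, hx⟩ := hTne s
            exact hTdisj s a x hx (hsa hx)
      · -- IsBetaChain
        intro j
        refine ⟨?_, ?_, ?_, ?_⟩
        · intro r
          refine ⟨?_, fun B hB => hB.2, ?_⟩
          · rintro ⟨h1, -⟩
            exact (δ _).empty_not_mem h1
          · intro a ha
            obtain ⟨B, ⟨hB, haB⟩, hu⟩ :=
              (δ ⟨p + r.val, by have := r.isLt; omega⟩).existsUnique_mem a
            have hBT : B ⊆ T j := by
              obtain ⟨j', hj'⟩ := hbelow ⟨p + r.val, by have := r.isLt; omega⟩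
                (Nat.le_add_right p r.val) B hB
              rw [← hTdisj j' j a (hj' haB) ha]
              exact hj'
            refine ⟨B, ⟨⟨hB, hBT⟩, haB⟩, ?_⟩
            rintro B' ⟨⟨hB', -⟩, haB'⟩
            exact hu B' ⟨hB', haB'⟩
        · intro r s hrs B hB
          obtain ⟨hBm, hBT⟩ := hB
          have hle : (δ ⟨p + r.val, by have := r.isLt; omega⟩).le
              (δ ⟨p + s.val, by have := s.isLt; omega⟩) := hmono _ _ (by
            simp only [Fin.mk_le_mk]
            exact Nat.add_le_add_left hrs p)
          refine ⟨{C | C ∈ (δ ⟨p + s.val, by have := s.isLt; omega⟩).blocks ∧ C ⊆ B},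
            fun C hC => ⟨hC.1, Set.Subset.trans hC.2 hBT⟩, PartitionFin.block_eq hle hBm⟩
        · -- β j 0 = {T j}
          have h00 : (⟨p + (0 : Fin (q + 1)).val, by omega⟩ : Fin (p + q + 1)) = ⟨p, by omega⟩ :=
            Fin.ext (by simp)
          beta_reduce
          rw [h00]
          ext B
          simp only [Set.mem_setOf_eq, Set.mem_singleton_iff, hp]
          constructor
          · rintro ⟨⟨j', rfl⟩, hj'⟩
            obtain ⟨x, hx⟩ := hTne j'
            rw [hTdisj j' j x hx (hj' hx)]
          · rintro rfl
            exact ⟨⟨j, rfl⟩, le_refl _⟩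
        · -- β j last
          have hql : (⟨p + (Fin.last q).val, by omega⟩ : Fin (p + q + 1)) = Fin.last (p + q) :=
            Fin.ext (by simp)
          beta_reduce
          rw [hql]
          ext B
          simp only [Set.mem_setOf_eq, hlast]
          constructor
          · rintro ⟨⟨a, rfl⟩, ha⟩
            exact ⟨a, ha rfl, rfl⟩
          · rintro ⟨a, ha, rfl⟩
            exact ⟨⟨a, rfl⟩, Set.singleton_subset_iff.mpr ha⟩
      · -- δ i = graft i
        intro i
        by_cases hi : (i : ℕ) ≤ p
        · rw [graft_apply_le p q T _ _ i hi, coarsen_blocks]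
          have hii : (⟨(⟨(i : ℕ), Nat.lt_succ_of_le hi⟩ : Fin (p + 1)).val, by omega⟩ :
              Fin (p + q + 1)) = i := Fin.ext (by simp)
          rw [hii]
          ext B
          simp only [Set.mem_setOf_eq]
          constructor
          · intro hB
            exact ⟨{s | T s ⊆ B}, ⟨B, hB, rfl⟩, hcover i hi B hB⟩
          · rintro ⟨S, ⟨B', hB', rfl⟩, rfl⟩
            rw [← hcover i hi B' hB']
            exact hB'
        · push_neg at hi
          rw [graft_apply_gt p q T _ _ i hi]
          have hii : (⟨p + (⟨(i : ℕ) - p, by have := i.isLt; omega⟩ : Fin (q + 1)).val,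
              by have := i.isLt; omega⟩ : Fin (p + q + 1)) = i := Fin.ext (by simp; omega)
          rw [hii]
          ext B
          simp only [Set.mem_setOf_eq]
          constructor
          · intro hB
            obtain ⟨j, hj⟩ := hbelow i (Nat.le_of_lt hi) B hB
            exact ⟨j, hB, hj⟩
          · rintro ⟨j, hB, -⟩
            exact hB
  · -- uniqueness
    intro γ γ' β β' hγ hβ hγ' hβ' hd hd'
    have key : ∀ (A A' : Set (Set (Fin n))),
        {B | ∃ S ∈ A, B = ⋃ s ∈ S, T s} = {B | ∃ S ∈ A', B = ⋃ s ∈ S, T s} → A ⊆ A' := by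
      intro A A' hAA S hS
      have hmem : (⋃ s ∈ S, T s) ∈ {B | ∃ S ∈ A', B = ⋃ s ∈ S, T s} := hAA ▸ ⟨S, hS, rfl⟩
      obtain ⟨S', hS', hSS⟩ := hmem
      rw [hFinj S S' hSS]
      exact hS'
    constructor
    · funext i
      apply PartitionFin.ext'
      have hip : ((⟨(i : ℕ), by omega⟩ : Fin (p + q + 1)) : ℕ) ≤ p := Nat.lt_succ_iff.mp i.isLt
      have ei := (hd ⟨(i : ℕ), by omega⟩).symm.trans (hd' ⟨(i : ℕ), by omega⟩)
      rw [graft_apply_le p q T γ β _ hip, graft_apply_le p q T γ' β' _ hip] at ei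
      have hei : (⟨((⟨(i : ℕ), by omega⟩ : Fin (p + q + 1)) : ℕ), Nat.lt_succ_of_le hip⟩ :
          Fin (p + 1)) = i := Fin.ext (by simp)
      rw [hei] at ei
      exact Set.Subset.antisymm (key _ _ ei) (key _ _ ei.symm)
    · funext j r
      by_cases hr : r = 0
      · rw [hr, (hβ j).2.2.1, (hβ' j).2.2.1]
      · have hr1 : 0 < (r : ℕ) := Nat.pos_of_ne_zero (fun h => hr (Fin.ext h))
        have hlt : p < ((⟨p + (r : ℕ), by have := r.isLt; omega⟩ : Fin (p + q + 1)) : ℕ) := by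
          simp only [Fin.val_mk]
          omega
        have ei := (hd ⟨p + (r : ℕ), by have := r.isLt; omega⟩).symm.trans
          (hd' ⟨p + (r : ℕ), by have := r.isLt; omega⟩)
        rw [graft_apply_gt p q T γ β _ hlt, graft_apply_gt p q T γ' β' _ hlt] at ei
        have her : (⟨((⟨p + (r : ℕ), by have := r.isLt; omega⟩ : Fin (p + q + 1)) : ℕ) - p,
            by omega⟩ : Fin (q + 1)) = r := Fin.ext (by simp)
        rw [her] at ei
        have char : ∀ (βx : Fin n → Fin (q + 1) → Set (Set (Fin k))), IsBetaChain q T βx →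
            ∀ B, B ∈ βx j r ↔ B ∈ {B | ∃ j', B ∈ βx j' r} ∧ B ⊆ T j := by
          intro βx hβx B
          constructor
          · intro hB
            exact ⟨⟨j, hB⟩, ((hβx j).1 r).2.1 B hB⟩
          · rintro ⟨⟨j', hB⟩, hBT⟩
            have hsub : B ⊆ T j' := ((hβx j').1 r).2.1 B hB
            have hne : B.Nonempty :=
              Set.nonempty_iff_ne_empty.mpr (fun h => ((hβx j').1 r).1 (h ▸ hB))
            obtain ⟨a, ha⟩ := hne
            rw [← hTdisj j' j a (hsub ha) (hBT ha)]
            exact hB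
        ext B
        rw [char β hβ B, char β' hβ' B, ei]
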